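/- arXiv:2102.12734 — 2 statements merged into one kernel-verified Lean document; each statement's English description precedes it below -/
import Mathlib

section
/- One-step over-approximation soundness: for any m ≥ 1 with δ = T/m, the set P_m produced by iterating P_j = Reach(P_{j−1},A,δ) ∩ B(f(jδ),ε) from P_0 contains SReach(P_0,A,f,ε,T); in particular, if P_m = ∅ (or any intermediate P_j = ∅) then SReach(P_0,A,f,ε,T) = ∅. -/
open Matrix Set

noncomputable def reach {n : ℕ} (A : Matrix (Fin n) (Fin n) ℝ) (t : ℝ)
    (P : Set (Fin n → ℝ)) : Set (Fin n → ℝ) :=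
  (fun x => NormedSpace.exp (t • A) *ᵥ x) '' P

noncomputable def sreach {n : ℕ} (P : Set (Fin n → ℝ)) (A : Matrix (Fin n) (Fin n) ℝ)
    (f : ℝ → (Fin n → ℝ)) (ε T : ℝ) : Set (Fin n → ℝ) :=
  (fun x => NormedSpace.exp (T • A) *ᵥ x) ''
    {x ∈ P | ∀ t ∈ Set.Icc (0:ℝ) T, ‖NormedSpace.exp (t • A) *ᵥ x - f t‖ ≤ ε}

/-! If `x ∈ P 0` stays in the tube, then `exp (jδ • A) x ∈ P j` for every `j ≤ m`, by induction on
`j`: `exp (jδ • A)` is the `j`-th iterate of the one-step map `exp (δ • A)`, and the tube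
constraint is only needed at the sample times `jδ ∈ [0, T]`. At `j = m` this is `exp (T • A) x`. -/

theorem Set.iterate_mem_of_eq_image_inter {X : Type*} (g : X → X) (S P : ℕ → Set X) {m : ℕ}
    (hstep : ∀ j < m, P (j + 1) = g '' P j ∩ S (j + 1)) {x : X} (hx : x ∈ P 0)
    (hS : ∀ j < m, g^[j + 1] x ∈ S (j + 1)) : ∀ j ≤ m, g^[j] x ∈ P j := by
  intro j hj
  induction j with
  | zero => exact hx
  | succ j ih =>
    rw [hstep j hj]
    exact ⟨⟨g^[j] x, ih (Nat.le_of_succ_le hj), (Function.iterate_succ_apply' g j x).symm⟩, hS j hj⟩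

theorem Matrix.iterate_exp_smul_mulVec {𝕂 n : Type*} [RCLike 𝕂] [Fintype n] [DecidableEq n]
    (A : Matrix n n 𝕂) (δ : 𝕂) (j : ℕ) (x : n → 𝕂) :
    (fun y => NormedSpace.exp (δ • A) *ᵥ y)^[j] x = NormedSpace.exp (((j : 𝕂) * δ) • A) *ᵥ x := by
  induction j with
  | zero => simp
  | succ j ih =>
    rw [Function.iterate_succ_apply', ih, mulVec_mulVec, ← Matrix.exp_add_of_commute]
    · push_cast; rw [← add_smul]; ring_nf
    · exact ((Commute.refl A).smul_right _).smul_left _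

theorem natCast_mul_div_mem_Icc {T : ℝ} (hT : 0 ≤ T) {m j : ℕ} (hj : j ≤ m) :
    (j : ℝ) * (T / m) ∈ Icc 0 T := by
  refine ⟨by positivity, ?_⟩
  rcases Nat.eq_zero_or_pos m with rfl | hm
  · simp [hT]
  · rw [mul_div_left_comm]
    exact mul_le_of_le_one_right hT ((div_le_one (by positivity)).2 (by exact_mod_cast hj))

theorem overapprox_sound_general {n : ℕ} (A : Matrix (Fin n) (Fin n) ℝ)
    (f : ℝ → (Fin n → ℝ))
    (ε T : ℝ) (hT : 0 < T) (m : ℕ) (hm : 0 < m)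
    (δ : ℝ) (hδ : δ = T / m)
    (P : ℕ → Set (Fin n → ℝ))
    (hstep : ∀ j < m, P (j + 1) =
      ((fun x => NormedSpace.exp (δ • A) *ᵥ x) '' P j) ∩
        {z : Fin n → ℝ | ‖z - f ((j + 1 : ℕ) * δ)‖ ≤ ε}) :
    sreach (P 0) A f ε T ⊆ P m ∧
      ((∃ j ≤ m, P j = ∅) → sreach (P 0) A f ε T = ∅) := by
  have hsampled : ∀ x ∈ P 0, (∀ t ∈ Icc 0 T, ‖NormedSpace.exp (t • A) *ᵥ x - f t‖ ≤ ε) →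
      ∀ j ≤ m, NormedSpace.exp (((j : ℝ) * δ) • A) *ᵥ x ∈ P j := by
    intro x hx htube j hj
    rw [← iterate_exp_smul_mulVec]
    refine iterate_mem_of_eq_image_inter _ (fun k => {z | ‖z - f (k * δ)‖ ≤ ε}) P hstep hx
      (fun k hk => ?_) j hj
    rw [iterate_exp_smul_mulVec]
    exact htube _ (hδ ▸ natCast_mul_div_mem_Icc hT.le hk)
  have hmδ : (m : ℝ) * δ = T := by
    rw [hδ]
    field_simp
  refine ⟨?_, fun ⟨j, hj, hPj⟩ => eq_empty_of_forall_notMem ?_⟩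
  · rintro _ ⟨x, ⟨hx, htube⟩, rfl⟩
    simpa [hmδ] using hsampled x hx htube m le_rfl
  · rintro _ ⟨x, ⟨hx, htube⟩, rfl⟩
    simpa [hPj] using hsampled x hx htube j hj

/-- One-step over-approximation soundness: iterating
`P_{j+1} = Reach(P_j, A, δ) ∩ B(f((j+1)δ), ε)` with `δ = T/m` yields a set `P_m`
containing `SReach(P_0, A, f, ε, T)`; in particular if some `P_j` is empty then the
synchronized reachable set is empty. -/
theorem overapprox_sound {n : ℕ} (A B : Matrix (Fin n) (Fin n) ℝ) (x₀ : Fin n → ℝ)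
    (f : ℝ → (Fin n → ℝ)) (hf : ∀ t, f t = NormedSpace.exp (t • B) *ᵥ x₀)
    (ε T : ℝ) (hε : 0 ≤ ε) (hT : 0 < T) (m : ℕ) (hm : 0 < m)
    (δ : ℝ) (hδ : δ = T / m)
    (P : ℕ → Set (Fin n → ℝ))
    (hstep : ∀ j < m, P (j + 1) =
      ((fun x => NormedSpace.exp (δ • A) *ᵥ x) '' P j) ∩
        {z : Fin n → ℝ | ‖z - f ((j + 1 : ℕ) * δ)‖ ≤ ε}) :
    sreach (P 0) A f ε T ⊆ P m ∧
      ((∃ j ≤ m, P j = ∅) → sreach (P 0) A f ε T = ∅) :=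
  overapprox_sound_general A f ε T hT m hm δ hδ P hstep
end

section
/- Robust completeness of sampled emptiness checking: let P ⊆ ℝⁿ be compact, A, B ∈ ℝ^{n×n}, f(t) = e^{Bt}x₀, and ε, ε₀ > 0. If for every x ∈ P there exists t ∈ [0,T] with dist(e^{At}·x, T(f,ε)(t)) > ε₀ (infinity-norm distance to the ε-tube), then there exists m ∈ ℕ such that for δ = T/m, for every x ∈ P there is some j ∈ {1,…,m} with e^{Ajδ}·x ∉ T(f,ε)(jδ). -/
open Matrix Set

/-!
The distance from `e^{At}x` to the centre `f t` of the tube is jointly continuous in `(x, t)`,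
hence uniformly continuous on the compact set `P × [0, T]`. Leaving the `ε`-tube by more than
`ε₀` means this distance is at least `ε + ε₀`, so it stays above `ε` within some time `δ`, uniformly
in `x ∈ P`; any grid of step `T / m < δ` has a point that close to the exit time.
-/

theorem Matrix.continuous_exp_smul {n : ℕ} (A : Matrix (Fin n) (Fin n) ℝ) :
    Continuous fun t : ℝ => NormedSpace.exp (t • A) := by
  -- an auxiliary matrix norm; its topology is the product topology, so the claim is unaffected
  let _ := Matrix.linftyOpNormedRing (n := Fin n) (α := ℝ)
  let _ := Matrix.linftyOpNormedAlgebra (n := Fin n) (R := ℝ) (α := ℝ)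
  have hexp : Continuous (NormedSpace.exp : Matrix (Fin n) (Fin n) ℝ → _) :=
    continuous_iff_continuousAt.2 fun B => (NormedSpace.exp_analytic (𝕂 := ℝ) B).continuousAt
  exact hexp.comp (continuous_id.smul continuous_const)

theorem Metric.add_le_dist_of_le_infDist_closedBall {E : Type*} [NormedAddCommGroup E]
    [NormedSpace ℝ E] {p c : E} {ε ε₀ : ℝ} (hε : 0 ≤ ε) (hε₀ : 0 < ε₀)
    (h : ε₀ ≤ Metric.infDist p (Metric.closedBall c ε)) : ε₀ + ε ≤ dist p c := by
  by_contra! hlt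
  have hmem : p ∈ Metric.thickening ε₀ (Metric.closedBall c ε) := by
    rw [thickening_closedBall hε₀ hε]
    exact hlt
  rw [Metric.mem_thickening_iff_infDist_lt ⟨c, Metric.mem_closedBall_self hε⟩] at hmem
  linarith

theorem exists_mem_Icc_le_natCast_le_add_one {u : ℝ} {m : ℕ} (hm : 0 < m) (hu₀ : 0 ≤ u)
    (hum : u ≤ m) : ∃ j ∈ Finset.Icc 1 m, u ≤ j ∧ (j : ℝ) ≤ u + 1 := by
  refine ⟨max 1 ⌈u⌉₊, Finset.mem_Icc.2 ⟨le_max_left _ _, max_le hm (Nat.ceil_le.2 hum)⟩, ?_, ?_⟩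
  · exact (Nat.le_ceil u).trans (by exact_mod_cast le_max_right _ _)
  · push_cast
    exact max_le (by linarith) (Nat.ceil_lt_add_one hu₀).le

theorem exists_grid_point_within_step {T t : ℝ} {m : ℕ} (hT : 0 < T) (hm : 0 < m)
    (ht : t ∈ Icc 0 T) :
    ∃ j ∈ Finset.Icc 1 m, (j : ℝ) * (T / m) ∈ Icc 0 T ∧ dist ((j : ℝ) * (T / m)) t ≤ T / m := by
  have hmR : (0 : ℝ) < m := Nat.cast_pos.2 hm
  have hd : 0 < T / m := div_pos hT hmR
  obtain ⟨j, hj, hlo, hhi⟩ := exists_mem_Icc_le_natCast_le_add_one hm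
    (div_nonneg ht.1 hd.le) ((div_le_iff₀ hd).2 (by rw [mul_div_cancel₀ _ hmR.ne']; exact ht.2))
  have hjm : (j : ℝ) ≤ m := by exact_mod_cast (Finset.mem_Icc.1 hj).2
  refine ⟨j, hj, ⟨by positivity, ?_⟩, ?_⟩
  · calc (j : ℝ) * (T / m) ≤ m * (T / m) := by gcongr
      _ = T := by field_simp
  · rw [div_le_iff₀ hd] at hlo
    rw [div_add_one hd.ne', le_div_iff₀ hd] at hhi
    rw [Real.dist_eq, abs_le]
    constructor <;> nlinarith

theorem IsCompact.exists_nat_forall_exists_sample_lt {X : Type*} [PseudoMetricSpace X]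
    {K : Set X} (hK : IsCompact K) {g : X × ℝ → ℝ} {T c η : ℝ} (hT : 0 < T) (hη : 0 < η)
    (hg : ContinuousOn g (K ×ˢ Icc 0 T)) (h : ∀ x ∈ K, ∃ t ∈ Icc 0 T, c + η ≤ g (x, t)) :
    ∃ m : ℕ, 0 < m ∧ ∀ x ∈ K, ∃ j ∈ Finset.Icc 1 m, c < g (x, j * (T / m)) := by
  obtain ⟨δ, hδ, hclose⟩ := Metric.uniformContinuousOn_iff.1
    ((hK.prod isCompact_Icc).uniformContinuousOn_of_continuous hg) η hη
  obtain ⟨m, hm⟩ := exists_nat_gt (T / δ)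
  have hm₀ : 0 < m := by exact_mod_cast (div_pos hT hδ).trans hm
  have hstep : T / m < δ := by
    rw [div_lt_iff₀ hδ] at hm
    rwa [div_lt_iff₀ (Nat.cast_pos.2 hm₀), mul_comm]
  refine ⟨m, hm₀, fun x hx => ?_⟩
  obtain ⟨t, ht, hgt⟩ := h x hx
  obtain ⟨j, hj, hjT, hdist⟩ := exists_grid_point_within_step hT hm₀ ht
  refine ⟨j, hj, ?_⟩
  have hnear := hclose (x, j * (T / m)) ⟨hx, hjT⟩ (x, t) ⟨hx, ht⟩
    (by rw [Prod.dist_eq, dist_self]; exact max_lt hδ (hdist.trans_lt hstep))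
  rw [Real.dist_eq, abs_lt] at hnear
  linarith

/-- Robust completeness of sampled emptiness checking: if every point of the compact
set `P` exits the ε-tube by more than `ε₀` at some time in `[0,T]`, then some finite
uniform sampling rate `m` detects a tube exit at a sampled time for every `x ∈ P`. -/
theorem robust_completeness {n : ℕ} (A B : Matrix (Fin n) (Fin n) ℝ) (x₀ : Fin n → ℝ)
    (f : ℝ → (Fin n → ℝ)) (hf : ∀ t, f t = NormedSpace.exp (t • B) *ᵥ x₀)
    (P : Set (Fin n → ℝ)) (hP : IsCompact P) (T ε ε₀ : ℝ)
    (hT : 0 < T) (hε : 0 < ε) (hε₀ : 0 < ε₀)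
    (h : ∀ x ∈ P, ∃ t ∈ Set.Icc (0:ℝ) T,
      ε₀ < Metric.infDist (NormedSpace.exp (t • A) *ᵥ x)
        {y : Fin n → ℝ | ‖y - f t‖ ≤ ε}) :
    ∃ m : ℕ, 0 < m ∧ ∀ x ∈ P, ∃ j ∈ Finset.Icc 1 m,
      ¬ ‖NormedSpace.exp (((j : ℝ) * (T / m)) • A) *ᵥ x - f ((j : ℝ) * (T / m))‖ ≤ ε := by
  have hf_cont : Continuous f := by
    rw [funext hf]
    exact (continuous_exp_smul B).matrix_mulVec continuous_const
  have hexit : ∀ x ∈ P, ∃ t ∈ Icc 0 T, ε + ε₀ ≤ ‖NormedSpace.exp (t • A) *ᵥ x - f t‖ := by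
    intro x hx
    obtain ⟨t, ht, hout⟩ := h x hx
    refine ⟨t, ht, ?_⟩
    rw [add_comm, ← dist_eq_norm]
    exact Metric.add_le_dist_of_le_infDist_closedBall hε.le hε₀ hout.le
  obtain ⟨m, hm, hsample⟩ := hP.exists_nat_forall_exists_sample_lt
    (g := fun p => ‖NormedSpace.exp (p.2 • A) *ᵥ p.1 - f p.2‖) hT hε₀
    ((((continuous_exp_smul A).comp continuous_snd).matrix_mulVec continuous_fst).sub
      (hf_cont.comp continuous_snd)).norm.continuousOn hexit
  exact ⟨m, hm, fun x hx => (hsample x hx).imp fun _ ⟨hj, hlt⟩ => ⟨hj, hlt.not_ge⟩⟩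
end
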